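/- Let k ≥ 2 and a ≥ 1. For all n ∈ ℕ, the number of occurrences of the two-letter word (a.k) in W_n^{(k)} satisfies c^{(k)}((a.k); n) = Σ_{i=max(n−k+1,0)}^{n−1} c^{(k)}((a.k); i) + [a > k]·c^{(k)}((a−k . 0); n−k) + [n = a+k−1], where [P] denotes the Iverson bracket and the term c^{(k)}((a−k . 0); n−k) is interpreted as 0 when n < k. -/

import Mathlib

/-- Image of a single letter `m = k*i + j` under the k-Bonacci morphism `φ_k` over ℕ:
`φ_k(ki+j) = (ki)(ki+j+1)` for `0 ≤ j ≤ k-2`, and `φ_k(ki+(k-1)) = ki+k`. -/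
def phiLetter (k m : ℕ) : List ℕ :=
  if m % k = k - 1 then [m + 1] else [k * (m / k), m + 1]

/-- The morphism `φ_k`, extended to words by concatenation. -/
def phi (k : ℕ) (w : List ℕ) : List ℕ := (w.map (phiLetter k)).flatten

/-- `W k n = φ_k^n(0)`, the n-th iterate of `φ_k` applied to the one-letter word `0`. -/
def W (k n : ℕ) : List ℕ := (phi k)^[n] [0]

/-- `shift n w = n ⊕ w`, adding `n` to every letter. -/
def shift (n : ℕ) (w : List ℕ) : List ℕ := w.map (· + n)

/-- `occ B w = |w|_B`, the number of (possibly overlapping) occurrences of `B`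
as a factor of `w`, i.e. the number of positions `i` at which `B` is a prefix
of the suffix of `w` starting at `i`. -/
def occ (B w : List ℕ) : ℕ :=
  ((List.range (w.length + 1)).filter (fun i => decide (B <+: w.drop i))).length

/-- `C k B = C_B^{(k)}(y) = Σ_{n≥0} |W_n^{(k)}|_B yⁿ` as a formal power series over ℚ. -/
noncomputable def C (k : ℕ) (B : List ℕ) : PowerSeries ℚ :=
  PowerSeries.mk (fun n => (occ B (W k n) : ℚ))

/-- `Hgf r = H_r(y)`, the multiplicative inverse of `1 - y - y² - ⋯ - y^r`. -/
noncomputable def Hgf (r : ℕ) : PowerSeries ℚ :=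
  (1 - ∑ j ∈ Finset.Icc 1 r, (PowerSeries.X : PowerSeries ℚ) ^ j)⁻¹

/-- `Ggf r = G_r(y) = (1 - y^r)·H_r(y) - 1`. -/
noncomputable def Ggf (r : ℕ) : PowerSeries ℚ :=
  (1 - (PowerSeries.X : PowerSeries ℚ) ^ r) * Hgf r - 1

/-- The set `B^{(k)} = B_1^{(k)} ∪ B_2^{(k)} ∪ B_3^{(k)}` of length-2 words. -/
def Bset (k : ℕ) : Set (List ℕ) :=
  {U | (∃ i a : ℕ, 1 ≤ a ∧ U = [a + k * i, k + k * i]) ∨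
       (∃ i b : ℕ, 1 ≤ b ∧ b ≤ k - 1 ∧ U = [k * i, b + k * i]) ∨
       (∃ a : ℕ, 1 ≤ a ∧ U = [a, 0])}

/-- The list of blocks in the decomposition of `W_n^{(k)}` for `n ≥ k`:
`W_{n-1}, …, W_{n-k+1}, k ⊕ W_{n-k}`. -/
def blocks (k n : ℕ) : List (List ℕ) :=
  (List.range (k - 1)).map (fun j => W k (n - 1 - j)) ++ [shift k (W k (n - k))]


lemma occ_nil (x y : ℕ) : occ [x,y] [] = 0 := by
  simp [occ, List.range_succ]

lemma single_prefix (y : ℕ) (w : List ℕ) : [y] <+: w ↔ w.head? = some y := by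
  cases w with
  | nil => simp
  | cons d w' => simp [List.cons_prefix_cons, eq_comm]

lemma occ_cons (x y c : ℕ) (w : List ℕ) :
    occ [x,y] (c :: w) = occ [x,y] w + (if c = x ∧ w.head? = some y then 1 else 0) := by
  have h : List.length (c :: w) + 1 = (w.length + 1) + 1 := by simp
  rw [occ, h, List.range_succ_eq_map, List.filter_cons, List.filter_map]
  have h2 : ∀ i : ℕ, ((fun i => decide ([x,y] <+: (c::w).drop i)) ∘ Nat.succ) i
      = (fun i => decide ([x,y] <+: w.drop i)) i := by
    intro i; simp
  rw [List.filter_congr (fun i _ => h2 i)]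
  have h3 : ([x,y] <+: c :: w) ↔ (c = x ∧ w.head? = some y) := by
    rw [List.cons_prefix_cons, single_prefix]
    constructor <;> exact fun ⟨h1, h2⟩ => ⟨h1.symm, h2⟩
  by_cases hc : c = x ∧ w.head? = some y
  · rw [if_pos (by simp [h3, hc, single_prefix]), if_pos hc]
    simp [occ]
  · rw [if_neg (by simp [h3, hc, single_prefix]), if_neg hc]
    simp [occ]
lemma occ_single (x y c : ℕ) : occ [x,y] [c] = 0 := by
  simp [occ_cons, occ_nil]

lemma occ_append (x y : ℕ) (u v : List ℕ) :
    occ [x,y] (u ++ v) = occ [x,y] u + occ [x,y] v +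
      (if u.getLast? = some x ∧ v.head? = some y then 1 else 0) := by
  induction u with
  | nil => simp [occ_nil]
  | cons c u ih =>
    rw [List.cons_append, occ_cons, ih, occ_cons]
    cases u with
    | nil => simp [occ_nil, occ_single]
    | cons d u' =>
      simp only [List.getLast?_cons_cons, List.head?_append, List.head?_cons, Option.or_some,
        Option.or]
      simp only [Option.some.injEq]
      omega

lemma occ_shift (x y k : ℕ) (w : List ℕ) : occ [x+k, y+k] (shift k w) = occ [x,y] w := by
  induction w with
  | nil => simp [shift, occ_nil]
  | cons c w ih =>
    have : shift k (c :: w) = (c + k) :: shift k w := rfl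
    rw [this, occ_cons, occ_cons, ih]
    have : (shift k w).head? = w.head?.map (· + k) := by cases w <;> simp [shift]
    rw [this]
    have hiff : (c + k = x + k ∧ w.head?.map (· + k) = some (y + k)) ↔ (c = x ∧ w.head? = some y) := by
      cases w <;> simp
    rw [if_congr hiff rfl rfl]

lemma occ_small1 (x y : ℕ) (w : List ℕ) (h : ∀ c ∈ w, c ≠ x) : occ [x,y] w = 0 := by
  induction w with
  | nil => exact occ_nil x y
  | cons c w ih =>
    rw [occ_cons, ih (fun c hc => h c (List.mem_cons_of_mem _ hc))]
    simp [h c (List.mem_cons_self)]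

lemma occ_small2 (x y : ℕ) (w : List ℕ) (h : ∀ c ∈ w, c ≠ y) : occ [x,y] w = 0 := by
  induction w with
  | nil => exact occ_nil x y
  | cons c w ih =>
    rw [occ_cons, ih (fun c hc => h c (List.mem_cons_of_mem _ hc))]
    have : w.head? ≠ some y := by
      cases w with
      | nil => simp
      | cons d w' => simpa using h d (by simp)
    simp [this]
lemma W_zero (k : ℕ) : W k 0 = [0] := rfl

lemma W_succ (k n : ℕ) : W k (n+1) = phi k (W k n) := by
  rw [W, Function.iterate_succ_apply', W]

lemma phi_cons (k c : ℕ) (w : List ℕ) : phi k (c :: w) = phiLetter k c ++ phi k w := by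
  simp [phi]

lemma phi_nil (k : ℕ) : phi k [] = [] := rfl

lemma phi_append (k : ℕ) (u v : List ℕ) : phi k (u ++ v) = phi k u ++ phi k v := by
  simp [phi]

lemma phiLetter_ne_nil (k m : ℕ) : phiLetter k m ≠ [] := by
  unfold phiLetter; split <;> simp

lemma phiLetter_getLast? (k m : ℕ) : (phiLetter k m).getLast? = some (m+1) := by
  unfold phiLetter; split <;> simp

lemma phi_ne_nil (k : ℕ) {w : List ℕ} (h : w ≠ []) : phi k w ≠ [] := by
  cases w with
  | nil => exact absurd rfl h
  | cons c w => rw [phi_cons]; simp [phiLetter_ne_nil k c]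

lemma phi_getLast? (k : ℕ) (w : List ℕ) (h : w ≠ []) :
    (phi k w).getLast? = w.getLast?.map (· + 1) := by
  induction w with
  | nil => exact absurd rfl h
  | cons c w ih =>
    rw [phi_cons, List.getLast?_append]
    cases w with
    | nil => simp [phi_nil, phiLetter_getLast?]
    | cons d w' =>
      rw [ih (by simp), List.getLast?_cons_cons]
      have h2 : (phi k (d :: w')).getLast?.isSome := Option.isSome_iff_ne_none.2
        (fun hn => phi_ne_nil k (by simp : (d:ℕ)::w' ≠ []) (List.getLast?_eq_none_iff.1 hn))
      obtain ⟨z, hz⟩ := Option.isSome_iff_exists.1 h2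
      rw [ih (by simp)] at hz
      simp [hz]

lemma phiLetter_shift (k m : ℕ) (hk : 2 ≤ k) :
    phiLetter k (m + k) = shift k (phiLetter k m) := by
  have hk0 : 0 < k := by omega
  unfold phiLetter
  rw [Nat.add_mod_right, Nat.add_div_right _ hk0]
  split <;> simp [shift, Nat.mul_succ] <;> omega

lemma phi_shift (k : ℕ) (hk : 2 ≤ k) (w : List ℕ) : phi k (shift k w) = shift k (phi k w) := by
  induction w with
  | nil => rfl
  | cons c w ih =>
    have : shift k (c :: w) = (c + k) :: shift k w := rfl
    rw [this, phi_cons, ih, phi_cons]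
    show _ = (phiLetter k c ++ phi k w).map (· + k)
    rw [List.map_append, phiLetter_shift k c hk]
    rfl

lemma W_ne_nil (k n : ℕ) : W k n ≠ [] := by
  induction n with
  | zero => simp [W_zero]
  | succ n ih => rw [W_succ]; exact phi_ne_nil k ih

lemma W_getLast? (k n : ℕ) : (W k n).getLast? = some n := by
  induction n with
  | zero => rfl
  | succ n ih => rw [W_succ, phi_getLast? k _ (W_ne_nil k n), ih]; rfl

lemma W_head? (k : ℕ) (hk : 2 ≤ k) (n : ℕ) : (W k n).head? = some 0 := by
  induction n with
  | zero => rfl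
  | succ n ih =>
    rw [W_succ]
    obtain ⟨w, hw⟩ : ∃ w, W k n = 0 :: w := by
      cases hW : W k n with
      | nil => exact absurd hW (W_ne_nil k n)
      | cons c w =>
        rw [hW] at ih
        simp only [List.head?_cons, Option.some.injEq] at ih
        exact ⟨w, by rw [ih]⟩
    rw [hw, phi_cons]
    have : phiLetter k 0 = [0, 1] := by
      unfold phiLetter
      rw [Nat.zero_mod, if_neg (by omega), Nat.zero_div, Nat.mul_zero]
    rw [this]
    rfl

lemma W_mem_le (k n : ℕ) : ∀ c ∈ W k n, c ≤ n := by
  induction n with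
  | zero => simp [W_zero]
  | succ n ih =>
    intro c hc
    rw [W_succ, phi] at hc
    simp only [List.mem_flatten, List.mem_map] at hc
    obtain ⟨l, ⟨m, hm, rfl⟩, hcl⟩ := hc
    have hmn := ih m hm
    unfold phiLetter at hcl
    split at hcl <;> simp at hcl
    · omega
    · rcases hcl with h | h
      · have h2 : k * (m / k) ≤ m := by rw [Nat.mul_comm]; exact Nat.div_mul_le_self m k
        omega
      · omega

lemma occ00_phi (k : ℕ) (hk : 2 ≤ k) (w : List ℕ) : occ [0,0] (phi k w) = 0 := by
  induction w with
  | nil => exact occ_nil 0 0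
  | cons c w ih =>
    rw [phi_cons, occ_append, ih, phiLetter_getLast?]
    have h1 : occ [0,0] (phiLetter k c) = 0 := by
      unfold phiLetter
      split
      · exact occ_single 0 0 _
      · rw [occ_cons, occ_single]; simp
    rw [h1]
    simp

lemma occ00_W (k : ℕ) (hk : 2 ≤ k) (n : ℕ) : occ [0,0] (W k n) = 0 := by
  cases n with
  | zero => exact occ_single 0 0 0
  | succ n => rw [W_succ]; exact occ00_phi k hk _
lemma phiLetter_zero (k : ℕ) (hk : 2 ≤ k) : phiLetter k 0 = [0, 1] := by
  unfold phiLetter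
  rw [Nat.zero_mod, if_neg (by omega), Nat.zero_div, Nat.mul_zero]

lemma phi_flatten (k : ℕ) (L : List (List ℕ)) :
    phi k L.flatten = (L.map (phi k)).flatten := by
  induction L with
  | nil => rfl
  | cons w L ih => rw [List.flatten_cons, phi_append, ih, List.map_cons, List.flatten_cons]

lemma smallDecomp (k : ℕ) (hk : 2 ≤ k) : ∀ n, 1 ≤ n → n ≤ k - 1 →
    W k n = ((List.range n).map (fun j => W k (n-1-j))).flatten ++ [n] := by
  intro n
  induction n with
  | zero => omega
  | succ n ih =>
    intro _ hn
    rcases Nat.eq_zero_or_pos n with rfl | hn1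
    · rw [show (1:ℕ) = 0 + 1 from rfl, W_succ, W_zero]
      rw [phi_cons, phiLetter_zero k hk, phi_nil]
      rfl
    · rw [W_succ, ih hn1 (by omega), phi_append, phi_flatten, List.map_map]
      have h1 : ∀ j ∈ List.range n, (phi k ∘ fun j => W k (n-1-j)) j = W k (n-j) := by
        intro j hj
        rw [List.mem_range] at hj
        show phi k (W k (n-1-j)) = W k (n-j)
        rw [← W_succ]
        congr 1
        omega
      rw [List.map_congr_left h1]
      have h2 : phi k [n] = [0, n+1] := by
        rw [show ([n] : List ℕ) = n :: [] from rfl, phi_cons, phi_nil, List.append_nil]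
        unfold phiLetter
        rw [Nat.mod_eq_of_lt (by omega), if_neg (by omega), Nat.div_eq_of_lt (by omega), Nat.mul_zero]
      rw [h2, List.range_succ, List.map_append, List.flatten_append]
      have h3 : ∀ j ∈ List.range n, (fun j => W k (n+1-1-j)) j = W k (n-j) := by
        intro j _
        rfl
      rw [List.map_congr_left h3]
      simp [W_zero, List.append_assoc]

lemma decomp (k : ℕ) (hk : 2 ≤ k) : ∀ n, k ≤ n →
    W k n = ((List.range (k-1)).map (fun j => W k (n-1-j))).flatten
      ++ shift k (W k (n-k)) := by
  intro n hn
  induction n, hn using Nat.le_induction with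
  | base =>
    have h0 : W k k = phi k (W k (k-1)) := by
      rw [← W_succ]; congr 1; omega
    rw [h0, smallDecomp k hk (k-1) (by omega) le_rfl, phi_append, phi_flatten, List.map_map]
    have h1 : ∀ j ∈ List.range (k-1), (phi k ∘ fun j => W k (k-1-1-j)) j = W k (k-1-j) := by
      intro j hj
      rw [List.mem_range] at hj
      show phi k (W k (k-1-1-j)) = W k (k-1-j)
      rw [← W_succ]
      congr 1
      omega
    rw [List.map_congr_left h1]
    have h2 : phi k [k-1] = [k] := by
      rw [show ([k-1] : List ℕ) = (k-1) :: [] from rfl, phi_cons, phi_nil, List.append_nil]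
      unfold phiLetter
      rw [if_pos (Nat.mod_eq_of_lt (by omega))]
      congr 1
      omega
    rw [h2]
    have h3 : shift k (W k (k-k)) = [k] := by
      rw [Nat.sub_self, W_zero]
      simp [shift]
    rw [h3]
  | succ n hn ih =>
    rw [W_succ, ih, phi_append, phi_flatten, List.map_map, phi_shift k hk, ← W_succ]
    have h1 : ∀ j ∈ List.range (k-1), (phi k ∘ fun j => W k (n-1-j)) j = W k (n+1-1-j) := by
      intro j hj
      rw [List.mem_range] at hj
      show phi k (W k (n-1-j)) = W k (n+1-1-j)
      rw [← W_succ]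
      congr 1
      omega
    rw [List.map_congr_left h1, show n+1-k = n-k+1 by omega]
lemma occ_flatten (k a : ℕ) (hk : 2 ≤ k) :
    ∀ (L : List (List ℕ)) (T : List ℕ), (∀ w ∈ L, w.head? = some 0) →
    occ [a,k] (L.flatten ++ T) = (L.map (occ [a,k])).sum + occ [a,k] T +
      (if (L.getLast?.bind (·.getLast?) = some a ∧ T.head? = some k) then 1 else 0) := by
  intro L
  induction L with
  | nil => intro T _; simp
  | cons w L ih =>
    intro T hL
    rw [List.flatten_cons, List.append_assoc, occ_append,
      ih T (fun v hv => hL v (List.mem_cons_of_mem _ hv))]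
    cases L with
    | nil =>
      simp only [List.flatten_nil, List.nil_append, List.map_nil, List.sum_nil,
        List.map_cons, List.sum_cons, List.getLast?_singleton, Option.bind_some,
        List.getLast?_nil, Option.bind_none]
      simp only [reduceCtorEq, false_and, ↓reduceIte]
      simp only [Nat.add_zero, Nat.zero_add, Nat.add_assoc]
      rfl
    | cons w' L' =>
      have hh : ((w'::L').flatten ++ T).head? = some 0 := by
        rw [List.flatten_cons, List.append_assoc]
        have hw := hL w' (by simp)
        cases w' with
        | nil => simp at hw
        | cons d t => simp only [List.cons_append, List.head?_cons] at hw ⊢; exact hw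
      rw [hh, if_neg (c := w.getLast? = some a ∧ (some 0 : Option ℕ) = some k)
        (by rintro ⟨-, h⟩; simp at h; omega), List.getLast?_cons_cons]
      simp only [List.map_cons, List.sum_cons]
      omega

lemma list_sum_range (g : ℕ → ℕ) (m : ℕ) :
    ((List.range m).map g).sum = ∑ j ∈ Finset.range m, g j := by
  induction m with
  | zero => simp
  | succ m ih =>
    rw [List.range_succ, List.map_append, List.sum_append, Finset.sum_range_succ, ih]
    simp

lemma sum_reindex (k n : ℕ) (g : ℕ → ℕ) (hk : 2 ≤ k) (hn : k ≤ n) :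
    ∑ j ∈ Finset.range (k-1), g (n-1-j) = ∑ i ∈ Finset.Ico (n+1-k) n, g i := by
  rw [Finset.sum_Ico_eq_sum_range, show n - (n+1-k) = k-1 by omega,
    ← Finset.sum_range_reflect]
  apply Finset.sum_congr rfl
  intro j hj
  rw [Finset.mem_range] at hj
  congr 1
  omega

lemma shift_head? (k : ℕ) (w : List ℕ) : (shift k w).head? = w.head?.map (· + k) := by
  cases w <;> simp [shift]

theorem stmt16 (k a n : ℕ) (hk : 2 ≤ k) (ha : 1 ≤ a) :
    occ [a, k] (W k n) =
      (∑ i ∈ Finset.Ico (n + 1 - k) n, occ [a, k] (W k i))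
      + (if k < a then (if k ≤ n then occ [a - k, 0] (W k (n - k)) else 0) else 0)
      + (if n = a + k - 1 then 1 else 0) := by
  by_cases hn : k ≤ n
  · -- main case
    have hL : ∀ w ∈ (List.range (k-1)).map (fun j => W k (n-1-j)), w.head? = some 0 := by
      intro w hw
      rw [List.mem_map] at hw
      obtain ⟨j, -, rfl⟩ := hw
      exact W_head? k hk _
    conv_lhs => rw [decomp k hk n hn,
      occ_flatten k a hk ((List.range (k-1)).map (fun j => W k (n-1-j))) _ hL]
    -- sum part
    rw [List.map_map, list_sum_range]
    simp only [Function.comp]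
    rw [sum_reindex k n (fun i => occ [a,k] (W k i)) hk hn]
    -- boundary part
    have hlast : (((List.range (k-1)).map (fun j => W k (n-1-j))).getLast?.bind (·.getLast?))
        = some (n-1-(k-2)) := by
      rw [List.getLast?_map, show k - 1 = (k-2) + 1 by omega, List.range_succ]
      simp [W_getLast?]
    rw [hlast, shift_head?, W_head? k hk]
    have hhead : (Option.map (· + k) (some 0)) = some k := by simp
    rw [hhead]
    -- middle part
    have hmid : occ [a, k] (shift k (W k (n-k)))
        = if k < a then occ [a - k, 0] (W k (n - k)) else 0 := by
      rcases lt_trichotomy a k with h | h | h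
      · rw [if_neg (by omega)]
        apply occ_small1
        intro c hc
        rw [shift, List.mem_map] at hc
        obtain ⟨d, -, rfl⟩ := hc
        omega
      · rw [if_neg (by omega), h]
        have h2 : occ [0 + k, 0 + k] (shift k (W k (n - k))) = occ [0,0] (W k (n-k)) :=
          occ_shift 0 0 k _
        simpa [occ00_W k hk] using h2
      · rw [if_pos h]
        have h2 : occ [(a-k) + k, 0 + k] (shift k (W k (n-k))) = occ [a-k, 0] (W k (n-k)) :=
          occ_shift (a-k) 0 k _
        rw [show (a-k) + k = a by omega] at h2
        simpa using h2
    rw [hmid, if_pos hn]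
    have hiff : (some (n-1-(k-2)) = some a ∧ (some k : Option ℕ) = some k) ↔ (n = a + k - 1) := by
      constructor
      · rintro ⟨h1, -⟩
        injection h1 with h1
        omega
      · intro h1
        exact ⟨by congr 1; omega, rfl⟩
    rw [if_congr hiff rfl rfl]
  · -- n < k
    have h0 : ∀ m, m < k → occ [a, k] (W k m) = 0 := by
      intro m hm
      exact occ_small2 a k _ (fun c hc => by have := W_mem_le k m c hc; omega)
    rw [h0 n (by omega)]
    rw [Finset.sum_congr rfl (fun i hi => h0 i (by rw [Finset.mem_Ico] at hi; omega))]
    rw [if_neg hn, if_neg (show ¬(n = a + k - 1) by omega)]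
    simp
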